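/- arXiv:1703.04648 — 4 statements merged into one kernel-verified Lean document; each statement's English description precedes it below -/
import Mathlib

section
/- Let Y and Z be sets (in the von Neumann universe) such that {∅} ⊗ ({∅} ∪ Y) = Z and Y ⊊ Z, where ⊗ denotes the unordered Cartesian product A ⊗ B = { {a,b} : a ∈ A, b ∈ B }. Then the rank of Z is finite (less than ω). -/
/-- Unordered Cartesian product: `A ⊗ B = { {a,b} : a ∈ A, b ∈ B }`. -/
def ZFSet.uprod (A B : ZFSet) : ZFSet :=
  ZFSet.sep (fun z => ∃ a ∈ A, ∃ b ∈ B, z = {a, b}) (ZFSet.powerset (A ∪ B))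

/-!
Every element of `Z = {∅} ⊗ ({∅} ∪ Y)` has the form `{∅, b}` with `b ∈ {∅} ∪ Y`. Since `Y ⊆ Z`,
∈-induction shows that `{∅} ∪ Y` consists of the sets `pairTower n` (`∅`, `{∅, ∅}`,
`{∅, {∅, ∅}}`, …, of rank `n`) and that it is closed downwards along this chain. If it contained
every `pairTower n`, then `Z ⊆ Y`; so it omits some `pairTower N`, hence only contains
`pairTower m` with `m < N`, and `rank Z ≤ N + 1`.
-/

namespace ZFSet

theorem mem_uprod {A B z : ZFSet} : z ∈ uprod A B ↔ ∃ a ∈ A, ∃ b ∈ B, z = {a, b} := by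
  refine mem_sep.trans ⟨And.right, fun h => ⟨?_, h⟩⟩
  obtain ⟨a, ha, b, hb, rfl⟩ := h
  rw [mem_powerset]
  intro w hw
  rcases mem_pair.1 hw with rfl | rfl
  exacts [mem_union.2 (Or.inl ha), mem_union.2 (Or.inr hb)]

theorem mem_uprod_singleton {a B z : ZFSet} : z ∈ uprod {a} B ↔ ∃ b ∈ B, z = {a, b} := by
  simp only [mem_uprod, mem_singleton, exists_eq_left]

theorem pair_right_injective (a : ZFSet) : Function.Injective fun b : ZFSet => ({a, b} : ZFSet) := by
  intro b c (h : ({a, b} : ZFSet) = {a, c})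
  have hb : b ∈ ({a, c} : ZFSet) := h ▸ mem_pair.2 (Or.inr rfl)
  have hc : c ∈ ({a, b} : ZFSet) := h.symm ▸ mem_pair.2 (Or.inr rfl)
  rcases mem_pair.1 hb with rfl | rfl
  · rcases mem_pair.1 hc with rfl | rfl <;> rfl
  · rfl

def pairTower : ℕ → ZFSet
  | 0 => ∅
  | n + 1 => {∅, pairTower n}

theorem rank_pairTower (n : ℕ) : (pairTower n).rank = n := by
  induction n with
  | zero => exact rank_empty
  | succ n ih =>
    rw [pairTower, rank_pair, ih, rank_empty, Order.succ_eq_add_one, Order.succ_eq_add_one,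
      max_eq_right (by simp)]
    push_cast
    rfl

theorem mem_of_pairTower_succ_mem_union {n : ℕ} {Y : ZFSet} (h : pairTower (n + 1) ∈ {∅} ∪ Y) :
    pairTower (n + 1) ∈ Y := by
  refine (mem_union.1 h).resolve_left fun h₀ => ?_
  have hempty : ∅ ∈ pairTower (n + 1) := mem_pair.2 (Or.inl rfl)
  exact notMem_empty ∅ (mem_singleton.1 h₀ ▸ hempty)

section SubsetUprod

variable {Y : ZFSet} (hY : Y ⊆ uprod {∅} ({∅} ∪ Y))
include hY

theorem exists_eq_pairTower_of_mem {y : ZFSet} (hy : y ∈ {∅} ∪ Y) : ∃ n, y = pairTower n := by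
  induction y using inductionOn with
  | _ y ih =>
    rcases mem_union.1 hy with hy | hy
    · exact ⟨0, mem_singleton.1 hy⟩
    · obtain ⟨b, hb, rfl⟩ := mem_uprod_singleton.1 (hY hy)
      obtain ⟨n, rfl⟩ := ih b (mem_pair.2 (Or.inr rfl)) hb
      exact ⟨n + 1, rfl⟩

theorem pairTower_mem_of_succ_mem {n : ℕ} (hn : pairTower (n + 1) ∈ {∅} ∪ Y) :
    pairTower n ∈ {∅} ∪ Y := by
  obtain ⟨b, hb, hnb⟩ := mem_uprod_singleton.1 (hY (mem_of_pairTower_succ_mem_union hn))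
  exact pair_right_injective ∅ hnb ▸ hb

theorem pairTower_mem_of_le {m n : ℕ} (hmn : m ≤ n) (hn : pairTower n ∈ {∅} ∪ Y) :
    pairTower m ∈ {∅} ∪ Y :=
  Nat.decreasingInduction (fun _ _ => pairTower_mem_of_succ_mem hY) hn hmn

theorem uprod_subset_of_forall_pairTower_mem (hall : ∀ n, pairTower n ∈ {∅} ∪ Y) :
    uprod {∅} ({∅} ∪ Y) ⊆ Y := by
  intro z hz
  obtain ⟨b, hb, rfl⟩ := mem_uprod_singleton.1 hz
  obtain ⟨k, rfl⟩ := exists_eq_pairTower_of_mem hY hb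
  exact mem_of_pairTower_succ_mem_union (hall (k + 1))

theorem rank_uprod_le_of_pairTower_notMem {N : ℕ} (hN : pairTower N ∉ {∅} ∪ Y) :
    (uprod {∅} ({∅} ∪ Y)).rank ≤ N + 1 := by
  rw [rank_le_iff]
  intro z hz
  obtain ⟨b, hb, rfl⟩ := mem_uprod_singleton.1 hz
  obtain ⟨m, rfl⟩ := exists_eq_pairTower_of_mem hY hb
  have hmN : m < N := lt_of_not_ge fun hNm => hN (pairTower_mem_of_le hY hNm hb)
  change (pairTower (m + 1)).rank < _
  rw [rank_pairTower]
  exact_mod_cast Nat.succ_lt_succ hmN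

end SubsetUprod

end ZFSet

open ZFSet in
theorem stmt_0 (Y Z : ZFSet)
    (h₁ : ZFSet.uprod {∅} ({∅} ∪ Y) = Z)
    (h₂ : Y ⊆ Z) (h₃ : Y ≠ Z) :
    Z.rank < Ordinal.omega0 := by
  subst h₁
  obtain ⟨N, hN⟩ : ∃ N, pairTower N ∉ {∅} ∪ Y := by
    by_contra! hall
    exact h₃ (subset_antisymm h₂ (uprod_subset_of_forall_pairTower_mem h₂ hall))
  exact (rank_uprod_le_of_pairTower_notMem h₂ hN).trans_lt
    (by exact_mod_cast Ordinal.natCast_lt_omega0 (N + 1))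
end

section
/- Let Y and Z be sets such that {∅} ⊗ ({∅} ∪ Y) = Z and Y ⊊ Z, where ⊗ denotes the unordered Cartesian product. Then Z \ Y is a singleton, i.e., |Z \ Y| = 1. -/
theorem Nat.eq_of_antitone_of_boundary {P : ℕ → Prop} (hP : Antitone P) {m n : ℕ}
    (hm : P m) (hm' : ¬P (m + 1)) (hn : P n) (hn' : ¬P (n + 1)) : m = n :=
  le_antisymm (not_lt.1 fun h => hn' (hP h hm)) (not_lt.1 fun h => hm' (hP h hn))

namespace ZFSet

theorem pair_ne_empty (a b : ZFSet) : ({a, b} : ZFSet) ≠ ∅ :=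
  fun h => notMem_empty a (h ▸ mem_insert a _)

theorem right_eq_of_pair_eq_pair {a b c : ZFSet} (h : ({a, b} : ZFSet) = {a, c}) : b = c := by
  have hb : b ∈ ({a, c} : ZFSet) := h ▸ mem_pair.2 (.inr rfl)
  have hc : c ∈ ({a, b} : ZFSet) := h ▸ mem_pair.2 (.inr rfl)
  rcases mem_pair.1 hb with rfl | rfl
  · rcases mem_pair.1 hc with rfl | rfl <;> rfl
  · rfl

def pairEmptyIter : ℕ → ZFSet
  | 0 => ∅
  | n + 1 => {∅, pairEmptyIter n}

section SelfProduct

variable {Y : ZFSet} (hY : Y ⊆ uprod {∅} ({∅} ∪ Y))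
include hY

theorem exists_eq_pairEmptyIter_of_mem {b : ZFSet} (hb : b ∈ {∅} ∪ Y) :
    ∃ n, b = pairEmptyIter n := by
  induction b using inductionOn with
  | h b ih =>
    rcases mem_union.1 hb with hb | hb
    · exact ⟨0, mem_singleton.1 hb⟩
    · obtain ⟨c, hc, rfl⟩ := mem_uprod_singleton.1 (hY hb)
      obtain ⟨n, rfl⟩ := ih c (mem_pair.2 (.inr rfl)) hc
      exact ⟨n + 1, rfl⟩

theorem antitone_pairEmptyIter_mem : Antitone fun n => pairEmptyIter n ∈ {∅} ∪ Y := by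
  refine antitone_nat_of_succ_le fun n hn => ?_
  rcases mem_union.1 hn with hn | hn
  · exact absurd (mem_singleton.1 hn) (pair_ne_empty _ _)
  · obtain ⟨c, hc, hnc⟩ := mem_uprod_singleton.1 (hY hn)
    exact right_eq_of_pair_eq_pair hnc ▸ hc

theorem exists_eq_pairEmptyIter_succ_of_mem_uprod_sdiff {w : ZFSet}
    (hw : w ∈ uprod {∅} ({∅} ∪ Y) \ Y) :
    ∃ n, w = pairEmptyIter (n + 1) ∧ pairEmptyIter n ∈ {∅} ∪ Y ∧
      pairEmptyIter (n + 1) ∉ {∅} ∪ Y := by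
  obtain ⟨hwZ, hwY⟩ := mem_sdiff.1 hw
  obtain ⟨b, hb, rfl⟩ := mem_uprod_singleton.1 hwZ
  obtain ⟨n, rfl⟩ := exists_eq_pairEmptyIter_of_mem hY hb
  refine ⟨n, rfl, hb, fun h => ?_⟩
  rcases mem_union.1 h with h | h
  exacts [pair_ne_empty _ _ (mem_singleton.1 h), hwY h]

theorem eq_of_mem_uprod_sdiff {w₁ w₂ : ZFSet} (hw₁ : w₁ ∈ uprod {∅} ({∅} ∪ Y) \ Y)
    (hw₂ : w₂ ∈ uprod {∅} ({∅} ∪ Y) \ Y) : w₁ = w₂ := by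
  obtain ⟨n₁, rfl, hn₁, hn₁'⟩ := exists_eq_pairEmptyIter_succ_of_mem_uprod_sdiff hY hw₁
  obtain ⟨n₂, rfl, hn₂, hn₂'⟩ := exists_eq_pairEmptyIter_succ_of_mem_uprod_sdiff hY hw₂
  rw [Nat.eq_of_antitone_of_boundary (antitone_pairEmptyIter_mem hY) hn₁ hn₁' hn₂ hn₂']

end SelfProduct

end ZFSet

theorem stmt_1 (Y Z : ZFSet)
    (h₁ : ZFSet.uprod {∅} ({∅} ∪ Y) = Z)
    (h₂ : Y ⊆ Z) (h₃ : Y ≠ Z) :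
    ∃ u : ZFSet, Z \ Y = {u} := by
  subst h₁
  obtain ⟨w, hwZ, hwY⟩ := SetLike.exists_of_lt (lt_of_le_of_ne h₂ h₃)
  have hw : w ∈ ZFSet.uprod {∅} ({∅} ∪ Y) \ Y := ZFSet.mem_sdiff.2 ⟨hwZ, hwY⟩
  refine ⟨w, ZFSet.ext fun z => ⟨fun hz => ?_, fun hz => ZFSet.mem_singleton.1 hz ▸ hw⟩⟩
  exact ZFSet.mem_singleton.2 (ZFSet.eq_of_mem_uprod_sdiff h₂ hz hw)
end

section
/- The Ackermann encoding ℕ : HF → ℕ satisfies: for all hereditarily finite sets h'' and h, if h'' ⊊ h then ℕ(h'') < ℕ(h). -/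
/-- A ZF-set is hereditarily finite iff its rank is finite. -/
def IsHF (x : ZFSet) : Prop := x.rank < Ordinal.omega0

/-- `f` is the Ackermann encoding on hereditarily finite sets:
`f h = Σ_{h' ∈ h} 2 ^ (f h')`. -/
def IsAckermann (f : ZFSet → ℕ) : Prop :=
  ∀ h : ZFSet, IsHF h →
    ∃ s : Finset ZFSet, (∀ x : ZFSet, x ∈ s ↔ x ∈ h) ∧ f h = ∑ x ∈ s, 2 ^ f x

theorem stmt_12 (f : ZFSet → ℕ) (hf : IsAckermann f) :
    ∀ h'' h : ZFSet, IsHF h'' → IsHF h → h'' ⊆ h → h'' ≠ h → f h'' < f h := by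
  intro h'' h hhf'' hhf hsub hne
  obtain ⟨s'', hs'', hsum''⟩ := hf h'' hhf''
  obtain ⟨s, hs, hsum⟩ := hf h hhf
  rw [hsum'', hsum]
  have hsubset : s'' ⊆ s := by
    intro x hx
    exact (hs x).mpr (hsub ((hs'' x).mp hx))
  have : ∃ x ∈ s, x ∉ s'' := by
    by_contra hcon
    push_neg at hcon
    apply hne
    apply ZFSet.ext
    intro x
    constructor
    · intro hx; exact hsub hx
    · intro hx; exact (hs'' x).mp (hcon x ((hs x).mpr hx))
  obtain ⟨x, hxs, hxs''⟩ := this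
  exact Finset.sum_lt_sum_of_subset hsubset hxs hxs'' (by positivity)
    (fun _ _ _ => by positivity)
end

section
/- Let x be a set and suppose sets x', y', w, z satisfy: x ∈ x', x' ∈ w, w ∈ z, z = y' × y' (Kuratowski ordered Cartesian product), and x' ∈ y' ∈ w. Then x' = {x}, y' = {x, {x}}, w = ⟨x, {x}⟩ (the Kuratowski ordered pair { {x}, {x,{x}} }), and z = {x,{x}} × {x,{x}}. -/
theorem stmt_16 (x x' y' w z : ZFSet)
    (h₁ : x ∈ x') (h₂ : x' ∈ w) (h₃ : w ∈ z)
    (h₄ : z = ZFSet.prod y' y')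
    (h₅ : x' ∈ y') (h₆ : y' ∈ w) :
    x' = ({x} : ZFSet) ∧
    y' = ({x, {x}} : ZFSet) ∧
    w = ZFSet.pair x {x} ∧
    z = ZFSet.prod ({x, {x}} : ZFSet) ({x, {x}} : ZFSet) := by
  subst h₄
  obtain ⟨a, ha, b, hb, hw⟩ := ZFSet.mem_prod.1 h₃
  subst hw
  rw [ZFSet.pair, ZFSet.mem_pair] at h₂ h₆
  have hy : y' = {a, b} := by
    rcases h₆ with hy | hy
    · exfalso
      rw [hy, ZFSet.mem_singleton] at h₅
      subst h₅
      apply ZFSet.mem_irrefl x'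
      rcases h₂ with h | h
      · conv_lhs => rw [h]
        exact ZFSet.mem_singleton.2 rfl
      · conv_lhs => rw [h]
        exact ZFSet.mem_pair.2 (Or.inl rfl)
    · exact hy
  subst hy
  have hx' : x' = {a} := by
    rcases h₂ with h | h
    · exact h
    · exact absurd (h ▸ h₅) (ZFSet.mem_irrefl x')
  subst hx'
  rw [ZFSet.mem_pair] at h₅
  have hba : b = {a} := by
    rcases h₅ with h | h
    · exfalso
      apply ZFSet.mem_irrefl a
      conv_lhs => rw [← h]
      exact ZFSet.mem_singleton.2 rfl
    · exact h.symm
  subst hba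
  rw [ZFSet.mem_singleton] at h₁
  subst h₁
  exact ⟨rfl, rfl, rfl, rfl⟩
end
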